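/- arXiv:1907.05968 — 5 statements merged into one kernel-verified Lean document; each statement's English description precedes it below -/
import Mathlib

section
/- The subgroup of SL₂(Z) generated by the matrices [[1,0],[2,1]] and [[1,2],[0,1]] is a free group of rank 2. -/
/-!
Sanov's ping-pong argument, for the shears `[[1,0],[m,1]]` and `[[1,m],[0,1]]` with `m ≥ 2`.
Let `SL₂(ℤ)` act on the nonzero vectors `(x, y)` of `ℤ²`. The lower shear `(x, y) ↦ (x, mx + y)`
sends every vector outside a region `YA` of steep vectors with `xy ≤ 0` into a region `XA` of
steep vectors with `xy > 0`, and its inverse sends everything outside `XA` into `YA`; the upper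
shear does the same with flat vectors and regions `XB`, `YB`. The four regions are pairwise
disjoint, so the ping-pong lemma shows that the two shears generate a free group.
-/

open scoped Function Pointwise MatrixGroups

def SubMulAction.nonzero (G M : Type*) [Group G] [AddMonoid M] [DistribMulAction G M] :
    SubMulAction G M where
  carrier := {x | x ≠ 0}
  smul_mem' g _ hx := (smul_ne_zero_iff_ne g).mpr hx

@[simp]
lemma SubMulAction.mem_nonzero {G M : Type*} [Group G] [AddMonoid M] [DistribMulAction G M]
    {x : M} : x ∈ SubMulAction.nonzero G M ↔ x ≠ 0 :=
  Iff.rfl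

lemma pairwise_disjoint_on_fin_two {α : Type*} [PartialOrder α] [OrderBot α] {a b : α} :
    Pairwise (Disjoint on ![a, b]) ↔ Disjoint a b := by
  refine ⟨fun h => h zero_ne_one, fun h => (pairwise_disjoint_on _).2 fun i j hij => ?_⟩
  fin_cases i <;> fin_cases j <;> simp_all

namespace Sanov

def lowerShear (m : ℤ) : SL(2, ℤ) := ⟨!![1, 0; m, 1], by simp [Matrix.det_fin_two_of]⟩

def upperShear (m : ℤ) : SL(2, ℤ) := ⟨!![1, m; 0, 1], by simp [Matrix.det_fin_two_of]⟩

lemma lowerShear_smul (m : ℤ) (v : Fin 2 → ℤ) : lowerShear m • v = ![v 0, m * v 0 + v 1] := by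
  rw [Matrix.SpecialLinearGroup.smul_def, Matrix.smul_eq_mulVec]
  ext i
  fin_cases i <;> simp [lowerShear, Matrix.mulVec, dotProduct]

lemma upperShear_smul (m : ℤ) (v : Fin 2 → ℤ) : upperShear m • v = ![v 0 + m * v 1, v 1] := by
  rw [Matrix.SpecialLinearGroup.smul_def, Matrix.smul_eq_mulVec]
  ext i
  fin_cases i <;> simp [upperShear, Matrix.mulVec, dotProduct]

lemma lowerShear_inv (m : ℤ) : (lowerShear m)⁻¹ = lowerShear (-m) := by
  ext : 1
  rw [Matrix.SpecialLinearGroup.coe_inv]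
  simp [lowerShear, Matrix.adjugate_fin_two_of]

lemma upperShear_inv (m : ℤ) : (upperShear m)⁻¹ = upperShear (-m) := by
  ext : 1
  rw [Matrix.SpecialLinearGroup.coe_inv]
  simp [upperShear, Matrix.adjugate_fin_two_of]

abbrev NonzeroVec := SubMulAction.nonzero SL(2, ℤ) (Fin 2 → ℤ)

lemma NonzeroVec.ne_zero_or_ne_zero (v : NonzeroVec) : v.1 0 ≠ 0 ∨ v.1 1 ≠ 0 := by
  by_contra! h
  exact v.2 (funext (Fin.forall_fin_two.2 h))

-- What `omega` needs to know about the nonlinear term `m * x`.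
lemma mul_comparison_of_two_le {m : ℤ} (hm : 2 ≤ m) (x : ℤ) :
    (0 ≤ x → 2 * x ≤ m * x) ∧ (x ≤ 0 → m * x ≤ 2 * x) :=
  ⟨mul_le_mul_of_nonneg_right hm, mul_le_mul_of_nonpos_right hm⟩

-- With `v = (x, y)`: `XA = {|x| < |y|, xy > 0}`, `YA = {|x| ≤ |y|, xy ≤ 0}`,
-- `XB = {|y| ≤ |x|, xy > 0}`, `YB = {|y| < |x|, xy ≤ 0}`, split by sign so that `omega` applies.
def XA : Set NonzeroVec := {v | 0 < v.1 0 ∧ v.1 0 < v.1 1 ∨ v.1 1 < v.1 0 ∧ v.1 0 < 0}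
def YA : Set NonzeroVec := {v | 0 ≤ v.1 0 ∧ v.1 1 ≤ -v.1 0 ∨ -v.1 0 ≤ v.1 1 ∧ v.1 0 ≤ 0}
def XB : Set NonzeroVec := {v | 0 < v.1 1 ∧ v.1 1 ≤ v.1 0 ∨ v.1 0 ≤ v.1 1 ∧ v.1 1 < 0}
def YB : Set NonzeroVec := {v | 0 ≤ v.1 1 ∧ v.1 0 < -v.1 1 ∨ -v.1 1 < v.1 0 ∧ v.1 1 ≤ 0}

lemma pingPongSets_disjoint :
    Disjoint XA XB ∧ Disjoint YA YB ∧
      Disjoint XA YA ∧ Disjoint XA YB ∧ Disjoint XB YA ∧ Disjoint XB YB := by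
  refine ⟨?_, ?_, ?_, ?_, ?_, ?_⟩ <;>
  · refine Set.disjoint_left.2 fun v hX hY => ?_
    have := NonzeroVec.ne_zero_or_ne_zero v
    simp only [XA, YA, XB, YB, Set.mem_ofPred_eq] at hX hY
    omega

variable {m : ℤ}

lemma lowerShear_smul_compl_YA (hm : 2 ≤ m) : lowerShear m • YAᶜ ⊆ XA := by
  rintro _ ⟨v, hv, rfl⟩
  have := NonzeroVec.ne_zero_or_ne_zero v
  have := mul_comparison_of_two_le hm (v.1 0)
  simp only [XA, YA, Set.mem_compl_iff, Set.mem_ofPred_eq, SubMulAction.val_smul, lowerShear_smul,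
    Matrix.cons_val_zero, Matrix.cons_val_one] at hv ⊢
  omega

lemma upperShear_smul_compl_YB (hm : 2 ≤ m) : upperShear m • YBᶜ ⊆ XB := by
  rintro _ ⟨v, hv, rfl⟩
  have := NonzeroVec.ne_zero_or_ne_zero v
  have := mul_comparison_of_two_le hm (v.1 1)
  simp only [XB, YB, Set.mem_compl_iff, Set.mem_ofPred_eq, SubMulAction.val_smul, upperShear_smul,
    Matrix.cons_val_zero, Matrix.cons_val_one] at hv ⊢
  omega

lemma lowerShear_inv_smul_compl_XA (hm : 2 ≤ m) : (lowerShear m)⁻¹ • XAᶜ ⊆ YA := by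
  rintro _ ⟨v, hv, rfl⟩
  have := NonzeroVec.ne_zero_or_ne_zero v
  have := mul_comparison_of_two_le hm (v.1 0)
  simp only [XA, YA, Set.mem_compl_iff, Set.mem_ofPred_eq, SubMulAction.val_smul, lowerShear_inv,
    lowerShear_smul, Matrix.cons_val_zero, Matrix.cons_val_one, neg_mul] at hv ⊢
  omega

lemma upperShear_inv_smul_compl_XB (hm : 2 ≤ m) : (upperShear m)⁻¹ • XBᶜ ⊆ YB := by
  rintro _ ⟨v, hv, rfl⟩
  have := NonzeroVec.ne_zero_or_ne_zero v
  have := mul_comparison_of_two_le hm (v.1 1)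
  simp only [XB, YB, Set.mem_compl_iff, Set.mem_ofPred_eq, SubMulAction.val_smul, upperShear_inv,
    upperShear_smul, Matrix.cons_val_zero, Matrix.cons_val_one, neg_mul] at hv ⊢
  omega

theorem injective_lift_shears (hm : 2 ≤ m) :
    Function.Injective (FreeGroup.lift ![lowerShear m, upperShear m]) := by
  obtain ⟨hXAXB, hYAYB, hXAYA, hXAYB, hXBYA, hXBYB⟩ := pingPongSets_disjoint
  refine FreeGroup.injective_lift_of_ping_pong _ ![XA, XB] ![YA, YB] ?_
    (pairwise_disjoint_on_fin_two.2 hXAXB) (pairwise_disjoint_on_fin_two.2 hYAYB) ?_ ?_ ?_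
  · intro i
    fin_cases i
    exacts [⟨⟨![1, 2], by simp⟩, by simp [XA]⟩, ⟨⟨![2, 1], by simp⟩, by simp [XB]⟩]
  · intro i j
    fin_cases i <;> fin_cases j
    exacts [hXAYA, hXAYB, hXBYA, hXBYB]
  · intro i
    fin_cases i
    exacts [lowerShear_smul_compl_YA hm, upperShear_smul_compl_YB hm]
  · intro i
    fin_cases i
    exacts [lowerShear_inv_smul_compl_XA hm, upperShear_inv_smul_compl_XB hm]

end Sanov

/-- The subgroup of `SL₂(ℤ)` generated by `[[1,0],[2,1]]` and `[[1,2],[0,1]]` is free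
of rank 2: the homomorphism from the free group on two generators sending the
generators to these matrices is injective, and its range is the subgroup they
generate. -/
theorem sl2_free_subgroup :
    let A : Matrix.SpecialLinearGroup (Fin 2) ℤ :=
      ⟨!![1, 0; 2, 1], by norm_num [Matrix.det_fin_two_of]⟩
    let B : Matrix.SpecialLinearGroup (Fin 2) ℤ :=
      ⟨!![1, 2; 0, 1], by norm_num [Matrix.det_fin_two_of]⟩
    Function.Injective (FreeGroup.lift (![A, B])) ∧
      (FreeGroup.lift (![A, B])).range = Subgroup.closure {A, B} := by
  intro A B
  refine ⟨Sanov.injective_lift_shears (m := 2) le_rfl, ?_⟩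
  rw [FreeGroup.range_lift_eq_closure, Matrix.range_cons_cons_empty]
end

section
/- Let G be a residually finite group and ψ ∈ F_n * G an equation over G. Then ψ has a solution in every finite quotient of G if and only if ψ has a solution in the profinite completion Ĝ. -/
/-!
A solution in `Ĝ` maps to a solution in each finite quotient `G ⧸ K`, and the values of the
variables there lift to `G` since the variables are free. Conversely, `Ĝ` is compact and the value
of `ψ` depends continuously on the values of the variables, so the closed sets of assignments
solving `ψ` modulo a single finite quotient have the finite intersection property: a solution
modulo the intersection of finitely many `K` solves `ψ` modulo each of them. A common point solves
`ψ` in `Ĝ`, whose elements are separated by the projections to the finite quotients.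
-/

/-- The index type of all finite quotients of `G`: finite-index normal subgroups. -/
structure FinQuot (G : Type) [Group G] where
  K : Subgroup G
  [normal : K.Normal]
  [fi : K.FiniteIndex]

attribute [instance] FinQuot.normal FinQuot.fi

instance (G : Type) [Group G] (q : FinQuot G) : TopologicalSpace (G ⧸ q.K) := ⊥
instance (G : Type) [Group G] (q : FinQuot G) : DiscreteTopology (G ⧸ q.K) := ⟨rfl⟩

instance (G : Type) [Group G] (q : FinQuot G) : IsTopologicalGroup (G ⧸ q.K) where
  continuous_mul := continuous_of_discreteTopology
  continuous_inv := continuous_of_discreteTopology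

/-- The diagonal map from `G` into the product of all its finite quotients. -/
def diagEmbed (G : Type) [Group G] : G →* ∀ q : FinQuot G, G ⧸ q.K :=
  Pi.monoidHom fun q => QuotientGroup.mk' q.K

/-- The profinite completion of `G`: the closure of the diagonal image of `G` in the
product of all its finite quotients (each discrete, the product carrying the product
topology). -/
def ProfiniteCompletion (G : Type) [Group G] : Subgroup (∀ q : FinQuot G, G ⧸ q.K) :=
  (diagEmbed G).range.topologicalClosure

/-- The canonical map `G → Ĝ`. -/
def toCompletion (G : Type) [Group G] : G →* ProfiniteCompletion G :=
  (diagEmbed G).codRestrict _ fun g =>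
    Subgroup.le_topologicalClosure _ (MonoidHom.mem_range.mpr ⟨g, rfl⟩)

/-- `ψ` is solvable in `H`, its constants read in `H` through `π`. -/
def SolvableAlong {F G H : Type*} [Group F] [Group G] [Group H] (ψ : Monoid.Coprod F G)
    (π : G →* H) : Prop :=
  ∃ φ : F →* H, Monoid.Coprod.lift φ π ψ = 1

section SolvableAlong

variable {F G H H' : Type*} [Group F] [Group G] [Group H] [Group H']

theorem Monoid.Coprod.lift_comp_id (φ : F →* G) (f : G →* H) :
    Monoid.Coprod.lift (f.comp φ) f = f.comp (Monoid.Coprod.lift φ (MonoidHom.id G)) := by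
  rw [Monoid.Coprod.comp_lift, MonoidHom.comp_id]

theorem SolvableAlong.comp {ψ : Monoid.Coprod F G} {π : G →* H} (h : SolvableAlong ψ π)
    (f : H →* H') : SolvableAlong ψ (f.comp π) := by
  obtain ⟨φ, hφ⟩ := h
  refine ⟨f.comp φ, ?_⟩
  rw [← Monoid.Coprod.comp_lift, MonoidHom.comp_apply, hφ, map_one]

theorem FreeGroup.exists_comp_eq_of_surjective {α : Type*} {π : G →* H}
    (hπ : Function.Surjective π) (φ : FreeGroup α →* H) :
    ∃ φ' : FreeGroup α →* G, π.comp φ' = φ := by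
  choose s hs using fun i => hπ (φ (FreeGroup.of i))
  exact ⟨FreeGroup.lift s, FreeGroup.ext_hom _ _ fun i => by simp [hs]⟩

theorem solvableAlong_iff_of_surjective {α : Type*} (ψ : Monoid.Coprod (FreeGroup α) G)
    {π : G →* H} (hπ : Function.Surjective π) :
    SolvableAlong ψ π ↔
      ∃ φ : FreeGroup α →* G, π (Monoid.Coprod.lift φ (MonoidHom.id G) ψ) = 1 := by
  constructor
  · rintro ⟨φ, hφ⟩
    obtain ⟨φ', rfl⟩ := FreeGroup.exists_comp_eq_of_surjective hπ φ
    exact ⟨φ', by rw [← MonoidHom.comp_apply, ← Monoid.Coprod.lift_comp_id, hφ]⟩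
  · rintro ⟨φ, hφ⟩
    exact ⟨π.comp φ, by rw [Monoid.Coprod.lift_comp_id, MonoidHom.comp_apply, hφ]⟩

end SolvableAlong

section Continuity

variable {α G H : Type*} [Group G] [Group H] [TopologicalSpace H] [IsTopologicalGroup H]

theorem FreeGroup.continuous_lift_apply (w : FreeGroup α) :
    Continuous fun x : α → H => FreeGroup.lift x w := by
  induction w using FreeGroup.induction_on with
  | C1 => simpa using continuous_const
  | of i => simpa using continuous_apply i
  | inv_of i hi => simp only [_root_.map_inv]; exact hi.inv
  | mul u v hu hv => simp only [_root_.map_mul]; exact hu.mul hv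

theorem Monoid.Coprod.continuous_lift_freeGroupLift_apply (π : G →* H)
    (ψ : Monoid.Coprod (FreeGroup α) G) :
    Continuous fun x : α → H => Monoid.Coprod.lift (FreeGroup.lift x) π ψ := by
  induction ψ using Monoid.Coprod.induction_on with
  | inl w => simpa using FreeGroup.continuous_lift_apply w
  | inr g => simpa using continuous_const
  | mul u v hu hv => simp only [_root_.map_mul]; exact hu.mul hv

end Continuity

theorem solvableAlong_of_forall_finset {α G H ι : Type*} [Group G] [Group H] [TopologicalSpace H]
    [IsTopologicalGroup H] [CompactSpace H] {Q : ι → Type*} [∀ i, Group (Q i)]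
    [∀ i, TopologicalSpace (Q i)] [∀ i, T1Space (Q i)] (p : ∀ i, H →* Q i)
    (hp : ∀ i, Continuous (p i)) (hsep : ∀ y, (∀ i, p i y = 1) → y = 1) (π : G →* H)
    (ψ : Monoid.Coprod (FreeGroup α) G)
    (hfin : ∀ u : Finset ι,
      ∃ φ : FreeGroup α →* H, ∀ i ∈ u, p i (Monoid.Coprod.lift φ π ψ) = 1) :
    SolvableAlong ψ π := by
  let Z (i : ι) : Set (α → H) := {x | p i (Monoid.Coprod.lift (FreeGroup.lift x) π ψ) = 1}
  have hZ (i : ι) : IsClosed (Z i) :=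
    isClosed_singleton.preimage
      ((hp i).comp (Monoid.Coprod.continuous_lift_freeGroupLift_apply π ψ))
  have hZfin (u : Finset ι) : (Set.univ ∩ ⋂ i ∈ u, Z i).Nonempty := by
    obtain ⟨φ, hφ⟩ := hfin u
    refine ⟨FreeGroup.lift.symm φ, trivial, Set.mem_iInter₂.mpr fun i hi => ?_⟩
    simpa [Z] using hφ i hi
  obtain ⟨x, -, hx⟩ := isCompact_univ.inter_iInter_nonempty Z hZ hZfin
  exact ⟨FreeGroup.lift x, hsep _ (Set.mem_iInter.mp hx)⟩

namespace ProfiniteCompletion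

variable (G : Type) [Group G]

instance : CompactSpace (ProfiniteCompletion G) :=
  isCompact_iff_compactSpace.mp (Subgroup.isClosed_topologicalClosure _).isCompact

def proj (q : FinQuot G) : ProfiniteCompletion G →* G ⧸ q.K :=
  (Pi.evalMonoidHom (fun q : FinQuot G => G ⧸ q.K) q).comp (ProfiniteCompletion G).subtype

theorem continuous_proj (q : FinQuot G) : Continuous (proj G q) :=
  (continuous_apply q).comp continuous_subtype_val

theorem proj_comp_toCompletion (q : FinQuot G) :
    (proj G q).comp (toCompletion G) = QuotientGroup.mk' q.K :=
  rfl

theorem eq_one_of_forall_proj_eq_one {y : ProfiniteCompletion G} (h : ∀ q, proj G q y = 1) :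
    y = 1 :=
  Subtype.ext (funext h)

end ProfiniteCompletion

theorem solvableAlong_toCompletion {G : Type} [Group G] {α : Type*}
    (ψ : Monoid.Coprod (FreeGroup α) G)
    (h : ∀ (K : Subgroup G) [K.Normal] [K.FiniteIndex],
      ∃ φ : FreeGroup α →* G, Monoid.Coprod.lift φ (MonoidHom.id G) ψ ∈ K) :
    SolvableAlong ψ (toCompletion G) := by
  refine solvableAlong_of_forall_finset (ProfiniteCompletion.proj G)
    (ProfiniteCompletion.continuous_proj G)
    (fun _ => ProfiniteCompletion.eq_one_of_forall_proj_eq_one G) _ ψ fun u => ?_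
  let N : Subgroup G := ⨅ q ∈ u, q.K
  have : N.Normal :=
    Subgroup.normal_iInf_normal fun q => Subgroup.normal_iInf_normal fun _ => q.normal
  have : N.FiniteIndex := Subgroup.finiteIndex_iInf' _ fun q _ => q.fi
  obtain ⟨φ, hφ⟩ := h N
  refine ⟨(toCompletion G).comp φ, fun q hq => ?_⟩
  rw [Monoid.Coprod.lift_comp_id, ← MonoidHom.comp_apply, ← MonoidHom.comp_assoc,
    ProfiniteCompletion.proj_comp_toCompletion, MonoidHom.comp_apply, QuotientGroup.mk'_apply,
    QuotientGroup.eq_one_iff]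
  exact Subgroup.mem_iInf.mp (Subgroup.mem_iInf.mp hφ q) hq

theorem equation_solvable_in_finite_quotients_iff_solvable_in_completion_general
    (G : Type) [Group G]
    (n : ℕ) (ψ : Monoid.Coprod (FreeGroup (Fin n)) G) :
    (∀ (K : Subgroup G) [K.Normal] [K.FiniteIndex],
        ∃ φ : FreeGroup (Fin n) →* G,
          (QuotientGroup.mk' K).comp (Monoid.Coprod.lift φ (MonoidHom.id G)) ψ = 1) ↔
      ∃ φ : FreeGroup (Fin n) →* ProfiniteCompletion G,
        Monoid.Coprod.lift φ (toCompletion G) ψ = 1 := by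
  constructor
  · intro h
    exact solvableAlong_toCompletion ψ fun K _ _ =>
      (h K).imp fun _ hφ => (QuotientGroup.eq_one_iff _).mp hφ
  · rintro (h : SolvableAlong ψ (toCompletion G)) K _ _
    have hK : SolvableAlong ψ (QuotientGroup.mk' K) :=
      ProfiniteCompletion.proj_comp_toCompletion G ⟨K⟩ ▸
        h.comp (ProfiniteCompletion.proj G ⟨K⟩)
    exact (solvableAlong_iff_of_surjective ψ (QuotientGroup.mk'_surjective K)).mp hK

/-- Let `ψ ∈ F_n * G` be an equation over a residually finite group `G`.  Then `ψ` is
solvable in every finite quotient of `G` if and only if `ψ` is solvable in the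
profinite completion `Ĝ`. -/
theorem equation_solvable_in_finite_quotients_iff_solvable_in_completion
    (G : Type) [Group G]
    (hG : ∀ g : G, g ≠ 1 → ∃ (K : Subgroup G), K.Normal ∧ K.FiniteIndex ∧ g ∉ K)
    (n : ℕ) (ψ : Monoid.Coprod (FreeGroup (Fin n)) G) :
    (∀ (K : Subgroup G) [K.Normal] [K.FiniteIndex],
        ∃ φ : FreeGroup (Fin n) →* G,
          (QuotientGroup.mk' K).comp (Monoid.Coprod.lift φ (MonoidHom.id G)) ψ = 1) ↔
      ∃ φ : FreeGroup (Fin n) →* ProfiniteCompletion G,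
        Monoid.Coprod.lift φ (toCompletion G) ψ = 1 :=
  equation_solvable_in_finite_quotients_iff_solvable_in_completion_general G n ψ
end

section
/- If H is a free factor of a group G (i.e., G = H * H̃ for some subgroup H̃), then the subspace topology on H induced from the profinite topology on G equals the profinite topology on H. -/
/-! A free factor `H` of `G` is a retract: killing the complementary factor gives a
homomorphism `r : G →* H` restricting to the identity on `H`. Since every group
homomorphism is continuous for the profinite topologies, both the inclusion and `r` are
continuous, so the subspace topology on `H` is squeezed between the profinite topology
of `H` and the topology pulled back along `r ∘ val = id`, which is again the profinite
topology of `H`. -/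

/-- The profinite topology on a group `G`: the weakest topology making the projection
to every finite (discrete) quotient continuous; equivalently, generated by cosets of
finite-index subgroups. -/
def profiniteTopology (G : Type) [Group G] : TopologicalSpace G :=
  ⨅ (K : Subgroup G) (_ : K.Normal) (_ : K.FiniteIndex),
    TopologicalSpace.induced (fun g : G => (QuotientGroup.mk g : G ⧸ K)) ⊥

/-- `G` is the internal free product of its subgroups `H` and `C`: the canonical map
`H ∗ C → G` is an isomorphism. -/
def IsInternalFreeProduct {G : Type} [Group G] (H C : Subgroup G) : Prop :=
  Function.Bijective (Monoid.Coprod.lift H.subtype C.subtype)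

section profiniteTopology

variable {G H : Type} [Group G] [Group H]

theorem profiniteTopology_le_induced (f : G →* H) :
    profiniteTopology G ≤ (profiniteTopology H).induced f := by
  simp only [profiniteTopology, induced_iInf, induced_compose]
  refine le_iInf fun K => le_iInf fun hK => le_iInf fun hKfin => ?_
  refine iInf_le_of_le (K.comap f) (iInf_le_of_le (hK.comap f)
    (iInf_le_of_le (FiniteIndexNormalSubgroup.comap f ⟨K, hK, hKfin⟩).isFiniteIndex' ?_))
  have hfactor : (QuotientGroup.mk : H → H ⧸ K) ∘ f =
      QuotientGroup.map (K.comap f) K f le_rfl ∘ QuotientGroup.mk := rfl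
  rw [hfactor, ← induced_compose]
  exact induced_mono bot_le

theorem induced_profiniteTopology_of_leftInverse (f : G →* H) (r : H →* G)
    (hrf : Function.LeftInverse r f) :
    (profiniteTopology H).induced f = profiniteTopology G := by
  refine le_antisymm ?_ (profiniteTopology_le_induced f)
  calc (profiniteTopology H).induced f
      ≤ ((profiniteTopology G).induced r).induced f :=
        induced_mono (profiniteTopology_le_induced r)
    _ = (profiniteTopology G).induced (r ∘ f) := induced_compose
    _ = profiniteTopology G := by rw [hrf.comp_eq_id, @induced_id _ (profiniteTopology G)]

end profiniteTopology

theorem IsInternalFreeProduct.exists_retraction {G : Type} [Group G] {H C : Subgroup G}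
    (hHC : IsInternalFreeProduct H C) :
    ∃ r : G →* H, Function.LeftInverse r H.subtype := by
  let e : Monoid.Coprod H C ≃* G := MulEquiv.ofBijective _ hHC
  refine ⟨(Monoid.Coprod.lift (MonoidHom.id H) 1).comp e.symm.toMonoidHom, fun h => ?_⟩
  have he : e.symm h = Monoid.Coprod.inl h :=
    (MulEquiv.symm_apply_eq e).2 (Monoid.Coprod.lift_apply_inl H.subtype C.subtype h).symm
  simp [he]

/-- If `H` is a free factor of `G`, then the subspace topology on `H` induced from
the profinite topology on `G` equals the profinite topology on `H`. -/
theorem freeFactor_induced_profiniteTopology (G : Type) [Group G] (H : Subgroup G)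
    (hfactor : ∃ C : Subgroup G, IsInternalFreeProduct H C) :
    TopologicalSpace.induced (Subtype.val : H → G) (profiniteTopology G) =
      profiniteTopology H := by
  obtain ⟨C, hHC⟩ := hfactor
  obtain ⟨r, hr⟩ := hHC.exists_retraction
  exact induced_profiniteTopology_of_leftInverse H.subtype r hr
end

section
/- If H is a finite-index subgroup of a group G, then the subspace topology on H induced from the profinite topology on G equals the profinite topology on H. -/
open TopologicalSpace

lemma induced_bot_le_induced_bot {X A B : Type*} (f : X → A) (g : X → B)
    (h : ∀ x y, g x = g y → f x = f y) :
    induced g (⊥ : TopologicalSpace B) ≤ induced f (⊥ : TopologicalSpace A) := by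
  intro s hs
  obtain ⟨t, -, rfl⟩ := (isOpen_induced_iff (t := ⊥)).mp hs
  refine (isOpen_induced_iff (t := ⊥)).mpr ⟨g '' (f ⁻¹' t), trivial, ?_⟩
  ext x
  refine ⟨fun ⟨y, hy, hyx⟩ => ?_, fun hx => ⟨x, hx, rfl⟩⟩
  simpa only [Set.mem_preimage, h y x hyx] using hy

lemma induced_bot_eq_induced_bot {X A B : Type*} (f : X → A) (g : X → B)
    (h : ∀ x y, f x = f y ↔ g x = g y) :
    induced f (⊥ : TopologicalSpace A) = induced g (⊥ : TopologicalSpace B) :=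
  le_antisymm (induced_bot_le_induced_bot g f fun x y => (h x y).mp)
    (induced_bot_le_induced_bot f g fun x y => (h x y).mpr)

namespace Subgroup

variable {G : Type*} [Group G]

lemma induced_mk_comp_subtype_eq (H K : Subgroup G) :
    induced (fun x : H => (QuotientGroup.mk (x : G) : G ⧸ K)) ⊥ =
      induced (QuotientGroup.mk : H → H ⧸ K.subgroupOf H) ⊥ :=
  induced_bot_eq_induced_bot _ _ fun x y => by
    simp only [QuotientGroup.eq, mem_subgroupOf, coe_mul, coe_inv]

lemma finiteIndex_map_subtype {H : Subgroup G} [H.FiniteIndex] (N : Subgroup H)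
    [N.FiniteIndex] :
    (N.map H.subtype).FiniteIndex :=
  ⟨by
    rw [index_map_subtype]
    exact mul_ne_zero FiniteIndex.index_ne_zero FiniteIndex.index_ne_zero⟩

lemma map_subtype_subgroupOf {H : Subgroup G} (N : Subgroup H) :
    (N.map H.subtype).subgroupOf H = N := by
  rw [← comap_subtype, comap_map_eq_self_of_injective H.subtype_injective]

end Subgroup

open Subgroup

lemma profiniteTopology_eq_iInf_finiteIndex (G : Type) [Group G] :
    profiniteTopology G =
      ⨅ (K : Subgroup G) (_ : K.FiniteIndex), induced (QuotientGroup.mk : G → G ⧸ K) ⊥ := by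
  refine le_antisymm (le_iInf₂ fun K _ => ?_)
    (le_iInf₂ fun K _ => le_iInf fun hK => iInf₂_le K hK)
  refine iInf₂_le_of_le K.normalCore (normalCore_normal K)
    (iInf_le_of_le (finiteIndex_normalCore K) ?_)
  exact induced_bot_le_induced_bot _ _ fun x y hxy =>
    QuotientGroup.eq.mpr (normalCore_le K (QuotientGroup.eq.mp hxy))

/-- If `H` is a finite-index subgroup of `G`, then the subspace topology on `H`
induced from the profinite topology on `G` equals the profinite topology on `H`. -/
theorem finiteIndex_induced_profiniteTopology (G : Type) [Group G] (H : Subgroup G)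
    (hfi : H.FiniteIndex) :
    TopologicalSpace.induced (Subtype.val : H → G) (profiniteTopology G) =
      profiniteTopology H := by
  simp only [profiniteTopology_eq_iInf_finiteIndex, induced_iInf, induced_compose]
  refine le_antisymm (le_iInf₂ fun N _ => ?_) (le_iInf₂ fun K hK => ?_)
  · refine (iInf₂_le (N.map H.subtype) (finiteIndex_map_subtype N)).trans_eq ?_
    rw [Function.comp_def, induced_mk_comp_subtype_eq, map_subtype_subgroupOf]
  · exact iInf₂_le_of_le (K.subgroupOf H) (instFiniteIndex_subgroupOf K H)
      (induced_mk_comp_subtype_eq H K).ge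
end

section
/- Let (N_j)_{j∈J} be a downward-directed family of subgroups of F_n, let N = ⋂_{j∈J} N_j, and let S ⊆ N be a finite subset. Then there exist a finitely generated subgroup H with S ⊆ H ≤ N and an index j₀ ∈ J such that H is a free factor of every subgroup N' satisfying H ≤ N' ≤ N_{j₀}. -/
/-!
Subgroups of `F = FreeGroup α` are read off labelled graphs as the words of closed walks at a
base point; over a fixed finite vertex set `V` and a finite alphabet there are only finitely many
such subgroups. If one of them, `M`, lies in `K`, the graph maps to the Schreier graph of `F ⧸ K`,
and pulling the whole Schreier graph back to `V` gives a subgroup `L ≥ M` read off `V` which is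
also read off a subgraph `Δ` of the Schreier graph. Such an `L` is a free factor of `K`: take a
spanning tree of the Schreier graph extending one of the component of the base point in `Δ`; the
Schreier generators of the edges of `Δ` generate `L`, the others generate a complement `C`, and
labelling each edge by its Schreier generator in `L ∗ C`, the product of the labels along a loop
(its holonomy) is a retraction `K → L ∗ C`.

For the theorem, let `H` be maximal among the subgroups read off `V` with `S ⊆ H ≤ ⨅ j, N j`, and
pick `j₀` such that `N j₀` misses each of the finitely many subgroups read off `V` that are not
contained in `⨅ j, N j`. If `H ≤ N' ≤ N j₀`, the free factor `L ≥ H` of `N'` above lies in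
`N j₀`, hence in `⨅ j, N j`, hence equals `H`.
-/

/-- `A` is a free factor of `B` (as subgroups of an ambient group): there is a
subgroup `C ≤ B` such that the canonical map `A ∗ C → B` is an isomorphism. -/
def IsFreeFactor {G : Type} [Group G] (A B : Subgroup G) : Prop :=
  ∃ (hAB : A ≤ B) (C : Subgroup G) (hCB : C ≤ B),
    Function.Bijective
      (Monoid.Coprod.lift (Subgroup.inclusion hAB) (Subgroup.inclusion hCB))

theorem FreeGroup.mk_singleton_false {α : Type*} (a : α) :
    FreeGroup.mk [(a, false)] = (FreeGroup.of a)⁻¹ := by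
  simp [FreeGroup.of, FreeGroup.inv_mk, FreeGroup.invRev]

open FreeGroup (mk of invRev mul_mk inv_mk one_eq_mk toWord mk_toWord mk_singleton_false)

theorem isFreeFactor_closure_of_retraction {G : Type} [Group G] {B : Subgroup G} {s t : Set G}
    (hsB : s ⊆ B) (htB : t ⊆ B) (hB : B ≤ Subgroup.closure (s ∪ t))
    (r : B →* Monoid.Coprod (Subgroup.closure s) (Subgroup.closure t))
    (hrs : ∀ x (hx : x ∈ s), r ⟨x, hsB hx⟩ = .inl ⟨x, Subgroup.subset_closure hx⟩)
    (hrt : ∀ x (hx : x ∈ t), r ⟨x, htB hx⟩ = .inr ⟨x, Subgroup.subset_closure hx⟩) :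
    IsFreeFactor (Subgroup.closure s) B := by
  have hA : Subgroup.closure s ≤ B := (Subgroup.closure_le B).mpr hsB
  have hC : Subgroup.closure t ≤ B := (Subgroup.closure_le B).mpr htB
  set ψ := Monoid.Coprod.lift (Subgroup.inclusion hA) (Subgroup.inclusion hC)
  have hrψ : r.comp ψ = MonoidHom.id _ := by
    ext : 1
    · refine MonoidHom.eq_of_eqOn_dense Subgroup.closure_closure_coe_preimage ?_
      rintro ⟨x, _⟩ hx
      exact hrs x hx
    · refine MonoidHom.eq_of_eqOn_dense Subgroup.closure_closure_coe_preimage ?_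
      rintro ⟨x, _⟩ hx
      exact hrt x hx
  refine ⟨hA, Subgroup.closure t, hC, Function.LeftInverse.injective (g := r)
    (DFunLike.congr_fun hrψ), ?_⟩
  have hrange : B ≤ ψ.range.map B.subtype := by
    refine hB.trans ((Subgroup.closure_le _).mpr ?_)
    rintro x (hx | hx)
    · exact ⟨ψ (.inl ⟨x, Subgroup.subset_closure hx⟩), ⟨_, rfl⟩, rfl⟩
    · exact ⟨ψ (.inr ⟨x, Subgroup.subset_closure hx⟩), ⟨_, rfl⟩, rfl⟩
  intro y
  obtain ⟨_, ⟨z, rfl⟩, hz⟩ := hrange y.2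
  exact ⟨z, Subtype.ext hz⟩

/-- A graph with edges labelled by `α`: the edge `(u, a, v)` reads the letter `a` from `u` to `v`
and the letter `a⁻¹` from `v` to `u`. -/
abbrev LabelledGraph (V α : Type*) := Set (V × α × V)

namespace LabelledGraph

variable {V W α : Type*}

def Step (E : LabelledGraph V α) : V → α × Bool → V → Prop
  | u, (a, true), v => (u, a, v) ∈ E
  | u, (a, false), v => (v, a, u) ∈ E

variable {E E' : LabelledGraph V α} {u v w b : V} {ℓ : α × Bool} {m m₁ m₂ : List (α × Bool)}

theorem Step.mono (h : E ⊆ E') (hs : Step E u ℓ v) : Step E' u ℓ v := by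
  rcases ℓ with ⟨a, _ | _⟩ <;> exact h hs

theorem Step.symm (hs : Step E u ℓ v) : Step E v (ℓ.1, !ℓ.2) u := by
  rcases ℓ with ⟨a, _ | _⟩ <;> exact hs

inductive Walk (E : LabelledGraph V α) : V → V → List (α × Bool) → Prop
  | nil (u : V) : Walk E u u []
  | cons {u v w : V} {ℓ : α × Bool} {m : List (α × Bool)} :
      Step E u ℓ v → Walk E v w m → Walk E u w (ℓ :: m)

namespace Walk

theorem append (h₁ : Walk E u v m₁) (h₂ : Walk E v w m₂) : Walk E u w (m₁ ++ m₂) := by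
  induction h₁ with
  | nil => exact h₂
  | cons hs _ ih => exact cons hs (ih h₂)

theorem concat (h : Walk E u v m) (hs : Step E v ℓ w) : Walk E u w (m ++ [ℓ]) :=
  h.append (cons hs (nil w))

theorem reverse (h : Walk E u v m) : Walk E v u (invRev m) := by
  induction h with
  | nil => exact nil _
  | cons hs _ ih => simpa [invRev] using ih.concat hs.symm

theorem mono (h : E ⊆ E') (hw : Walk E u v m) : Walk E' u v m := by
  induction hw with
  | nil => exact nil _
  | cons hs _ ih => exact cons (hs.mono h) ih

theorem exists_of_append (h : Walk E u w (m₁ ++ m₂)) : ∃ v, Walk E u v m₁ ∧ Walk E v w m₂ := by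
  induction m₁ generalizing u with
  | nil => exact ⟨u, nil u, h⟩
  | cons ℓ _ ih =>
    cases h with
    | cons hs hw =>
      obtain ⟨v, h₁, h₂⟩ := ih hw
      exact ⟨v, cons hs h₁, h₂⟩

end Walk

def Reachable (E : LabelledGraph V α) (u v : V) : Prop := ∃ m, Walk E u v m

theorem Reachable.refl (E : LabelledGraph V α) (u : V) : Reachable E u u := ⟨[], .nil u⟩

theorem Reachable.step (h : Reachable E u v) (hs : Step E v ℓ w) : Reachable E u w :=
  let ⟨_, hw⟩ := h; ⟨_, hw.concat hs⟩

def loopSubgroup (E : LabelledGraph V α) (b : V) : Subgroup (FreeGroup α) where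
  carrier := {x | ∃ m, Walk E b b m ∧ mk m = x}
  one_mem' := ⟨[], .nil b, rfl⟩
  mul_mem' := by
    rintro _ _ ⟨m₁, h₁, rfl⟩ ⟨m₂, h₂, rfl⟩
    exact ⟨m₁ ++ m₂, h₁.append h₂, mul_mk.symm⟩
  inv_mem' := by
    rintro _ ⟨m, h, rfl⟩
    exact ⟨invRev m, h.reverse, inv_mk.symm⟩

def restrict (E : LabelledGraph V α) (b : V) : LabelledGraph V α := {e ∈ E | Reachable E b e.1}

theorem restrict_subset : restrict E b ⊆ E := fun _ he => he.1

theorem Step.restrict (hs : Step E u ℓ v) (hu : Reachable E b u) : Step (restrict E b) u ℓ v := by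
  rcases ℓ with ⟨a, _ | _⟩
  · exact ⟨hs, hu.step hs⟩
  · exact ⟨hs, hu⟩

theorem Walk.restrict (hw : Walk E u v m) (hu : Reachable E b u) : Walk (restrict E b) u v m := by
  induction hw with
  | nil => exact nil _
  | cons hs _ ih => exact cons (hs.restrict hu) (ih (hu.step hs))

def induce (A : Set V) (E : LabelledGraph V α) : LabelledGraph V α := {e ∈ E | e.1 ∈ A ∧ e.2.2 ∈ A}

theorem induce_subset (A : Set V) : induce A E ⊆ E := fun _ he => he.1

theorem step_induce_iff {A : Set V} : Step (induce A E) u ℓ v ↔ Step E u ℓ v ∧ u ∈ A ∧ v ∈ A := by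
  rcases ℓ with ⟨a, _ | _⟩
  · simp only [Step, induce, Set.mem_ofPred_eq]; tauto
  · simp only [Step, induce, Set.mem_ofPred_eq]

def comap (φ : V → W) (E : LabelledGraph W α) : LabelledGraph V α :=
  {e | (φ e.1, e.2.1, φ e.2.2) ∈ E}

theorem step_comap_iff {φ : V → W} {E : LabelledGraph W α} :
    Step (comap φ E) u ℓ v ↔ Step E (φ u) ℓ (φ v) := by
  rcases ℓ with ⟨a, _ | _⟩ <;> rfl

theorem Walk.map_comap {φ : V → W} {E : LabelledGraph W α} (hw : Walk (comap φ E) u v m) :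
    Walk (induce (Set.range φ) E) (φ u) (φ v) m := by
  induction hw with
  | nil => exact nil _
  | @cons u v _ _ _ hs _ ih =>
    exact cons (step_induce_iff.mpr ⟨step_comap_iff.mp hs, ⟨u, rfl⟩, ⟨v, rfl⟩⟩) ih

theorem Walk.lift_comap {φ : V → W} {E : LabelledGraph W α} {x y : W}
    (hw : Walk (induce (Set.range φ) E) x y m) (hm : m ≠ []) {u v : V} (hu : φ u = x)
    (hv : φ v = y) : Walk (comap φ E) u v m := by
  induction hw generalizing u with
  | nil => exact absurd rfl hm
  | @cons x x' y ℓ m hs hw ih =>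
    obtain ⟨hs, -, u', rfl⟩ := step_induce_iff.mp hs
    subst hu
    rcases eq_or_ne m [] with rfl | hm'
    · cases hw
      exact cons (step_comap_iff.mpr (hv ▸ hs)) (nil v)
    · exact cons (step_comap_iff.mpr hs) (ih hm' rfl hv)

theorem loopSubgroup_comap (φ : V → W) (E : LabelledGraph W α) (b : V) :
    loopSubgroup (comap φ E) b = loopSubgroup (induce (Set.range φ) E) (φ b) := by
  ext x
  constructor
  · rintro ⟨m, hw, rfl⟩
    exact ⟨m, hw.map_comap, rfl⟩
  · rintro ⟨m, hw, rfl⟩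
    rcases eq_or_ne m [] with rfl | hm
    · exact ⟨[], .nil b, rfl⟩
    · exact ⟨m, hw.lift_comap hm rfl rfl, rfl⟩

def schreierGen (w : V → FreeGroup α) (e : V × α × V) : FreeGroup α :=
  w e.1 * of e.2.1 * (w e.2.2)⁻¹

theorem Step.mem_closure_schreierGen (w : V → FreeGroup α) (hs : Step E u ℓ v) :
    w u * mk [ℓ] * (w v)⁻¹ ∈ Subgroup.closure (schreierGen w '' E) := by
  rcases ℓ with ⟨a, _ | _⟩
  · convert inv_mem (Subgroup.subset_closure (Set.mem_image_of_mem (schreierGen w) hs)) using 1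
    simp [schreierGen, mk_singleton_false, mul_assoc]
  · exact Subgroup.subset_closure (Set.mem_image_of_mem (schreierGen w) hs)

theorem Walk.mem_closure_schreierGen (w : V → FreeGroup α) (hw : Walk E u v m) :
    w u * mk m * (w v)⁻¹ ∈ Subgroup.closure (schreierGen w '' E) := by
  induction hw with
  | nil => simp [← one_eq_mk]
  | @cons u u' v ℓ m hs _ ih =>
    have h := mul_mem (hs.mem_closure_schreierGen w) ih
    rwa [show w u * mk [ℓ] * (w u')⁻¹ * (w u' * mk m * (w v)⁻¹) = w u * (mk [ℓ] * mk m) * (w v)⁻¹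
      by group, mul_mk] at h

theorem loopSubgroup_eq_closure_schreierGen {w : V → FreeGroup α} (hb : w b = 1)
    (hw : ∀ v, Reachable E b v → ∃ m, Walk E b v m ∧ mk m = w v) :
    loopSubgroup E b = Subgroup.closure (schreierGen w '' restrict E b) := by
  apply le_antisymm
  · rintro _ ⟨m, hm, rfl⟩
    simpa [hb] using (hm.restrict (Reachable.refl E b)).mem_closure_schreierGen w
  · rw [Subgroup.closure_le]
    rintro _ ⟨⟨u, a, v⟩, ⟨he, hu⟩, rfl⟩
    obtain ⟨mu, hmu, hwu⟩ := hw u hu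
    obtain ⟨mv, hmv, hwv⟩ := hw v (hu.step (ℓ := (a, true)) he)
    refine ⟨mu ++ (a, true) :: invRev mv, hmu.append (.cons he hmv.reverse), ?_⟩
    rw [← mul_mk, ← List.singleton_append, ← mul_mk, ← inv_mk, hwu, hwv]
    simp only [schreierGen, mul_assoc]
    rfl

theorem loopSubgroup_fg [Finite V] [Finite α] (E : LabelledGraph V α) (b : V) :
    (loopSubgroup E b).FG := by
  classical
  let w : V → FreeGroup α := fun v =>
    if v = b then 1 else if h : Reachable E b v then mk h.choose else 1
  have hw : ∀ v, Reachable E b v → ∃ m, Walk E b v m ∧ mk m = w v := by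
    intro v hv
    by_cases hvb : v = b
    · subst hvb
      exact ⟨[], .nil v, by simp [w, ← one_eq_mk]⟩
    · exact ⟨hv.choose, hv.choose_spec, by simp [w, hvb, hv]⟩
  rw [loopSubgroup_eq_closure_schreierGen (by simp [w]) hw, Subgroup.fg_iff]
  exact ⟨_, rfl, (Set.toFinite _).image _⟩

noncomputable def dist (E : LabelledGraph V α) (u v : V) : ℕ :=
  sInf {k | ∃ m, Walk E u v m ∧ m.length = k}

theorem exists_step_dist_lt (hv : Reachable E b v) (hvb : v ≠ b) :
    ∃ u ℓ, Step E u ℓ v ∧ Reachable E b u ∧ dist E b u < dist E b v := by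
  obtain ⟨m, hm, hlen⟩ : ∃ m, Walk E b v m ∧ m.length = dist E b v :=
    Nat.sInf_mem (s := {k | ∃ m, Walk E b v m ∧ m.length = k})
      (let ⟨m, h⟩ := hv; ⟨m.length, m, h, rfl⟩)
  rcases List.eq_nil_or_concat m with rfl | ⟨m, ℓ, rfl⟩
  · cases hm; exact absurd rfl hvb
  · obtain ⟨u, hu, hs⟩ := Walk.exists_of_append (List.concat_eq_append .. ▸ hm)
    cases hs with
    | cons hs hnil =>
      cases hnil
      refine ⟨u, ℓ, hs, ⟨m, hu⟩, lt_of_le_of_lt (Nat.sInf_le ⟨m, hu, rfl⟩) ?_⟩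
      simp [← hlen]

end LabelledGraph

section Schreier

open LabelledGraph MulAction

variable {α X : Type*} [MulAction (FreeGroup α) X]

variable (α X) in
/-- The Schreier graph of the action: an `a`-edge from `of a • x` to `x`, so that reading `g`
from `x` leads to `g⁻¹ • x`. -/
def schreierGraph : LabelledGraph X α := {e | e.1 = of e.2.1 • e.2.2}

variable {E : LabelledGraph X α} {u v : X} {ℓ : α × Bool} {m : List (α × Bool)}

theorem step_schreierGraph_iff : Step (schreierGraph α X) u ℓ v ↔ u = mk [ℓ] • v := by
  rcases ℓ with ⟨a, _ | _⟩
  · simp [Step, schreierGraph, mk_singleton_false, eq_inv_smul_iff, eq_comm]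
  · rfl

theorem LabelledGraph.Walk.eq_mk_smul (hE : E ⊆ schreierGraph α X) (hw : Walk E u v m) :
    u = mk m • v := by
  induction hw with
  | nil => simp [← one_eq_mk]
  | @cons u u' v ℓ m hs _ ih =>
    rw [step_schreierGraph_iff.mp (hs.mono hE), ih, smul_smul, mul_mk]
    rfl

theorem loopSubgroup_le_stabilizer (hE : E ⊆ schreierGraph α X) (x₀ : X) :
    loopSubgroup E x₀ ≤ stabilizer (FreeGroup α) x₀ := by
  rintro _ ⟨m, hm, rfl⟩
  exact (hm.eq_mk_smul hE).symm

theorem walk_induce_schreierGraph {A : Set X} (x : X) (m : List (α × Bool))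
    (hA : ∀ p ∈ m.inits, (mk p)⁻¹ • x ∈ A) :
    Walk (induce A (schreierGraph α X)) x ((mk m)⁻¹ • x) m := by
  induction m generalizing x with
  | nil => simpa [← one_eq_mk] using Walk.nil x
  | cons ℓ m ih =>
    have hx : x ∈ A := by simpa [← one_eq_mk] using hA [] (by simp)
    have hy : (mk [ℓ])⁻¹ • x ∈ A := hA [ℓ] (by simp)
    have hstep : Step (induce A (schreierGraph α X)) x ℓ ((mk [ℓ])⁻¹ • x) :=
      step_induce_iff.mpr ⟨step_schreierGraph_iff.mpr (smul_inv_smul _ _).symm, hx, hy⟩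
    have hcons : ∀ p, (mk (ℓ :: p))⁻¹ • x = (mk p)⁻¹ • (mk [ℓ])⁻¹ • x := fun p => by
      rw [smul_smul, ← mul_inv_rev, mul_mk]
      rfl
    have hrest := ih ((mk [ℓ])⁻¹ • x) fun p hp => hcons p ▸ hA (ℓ :: p) (by simpa using hp)
    exact hcons m ▸ Walk.cons hstep hrest

theorem reachable_schreierGraph [IsPretransitive (FreeGroup α) X] (x y : X) :
    Reachable (schreierGraph α X) x y := by
  classical
  obtain ⟨g, rfl⟩ := exists_smul_eq (FreeGroup α) x y
  have h := walk_induce_schreierGraph (A := Set.univ) x (toWord g⁻¹) (fun _ _ => trivial)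
  rw [mk_toWord, inv_inv] at h
  exact ⟨_, h.mono (induce_subset _)⟩

section SpanningTree

variable [IsPretransitive (FreeGroup α) X] (Δ : LabelledGraph X α) (x₀ : X)

open Classical in
/-- Ranking the vertices reachable in `Δ` first makes the breadth-first spanning tree of the
Schreier graph built below restrict to a spanning tree of the component of `x₀` in `Δ`. -/
noncomputable def treeRank (v : X) : ℕ ×ₗ ℕ :=
  if Reachable Δ x₀ v then toLex (0, dist Δ x₀ v) else toLex (1, dist (schreierGraph α X) x₀ v)

theorem exists_treeParent (v : X) (hv : v ≠ x₀) :
    ∃ p : X × (α × Bool), treeRank Δ x₀ p.1 < treeRank Δ x₀ v ∧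
      (Reachable Δ x₀ v → Step Δ p.1 p.2 v ∧ Reachable Δ x₀ p.1) ∧
      (¬ Reachable Δ x₀ v → Step (schreierGraph α X) p.1 p.2 v) := by
  by_cases hΔv : Reachable Δ x₀ v
  · obtain ⟨u, ℓ, hs, hu, hlt⟩ := exists_step_dist_lt hΔv hv
    refine ⟨(u, ℓ), ?_, fun _ => ⟨hs, hu⟩, fun h => absurd hΔv h⟩
    simpa [treeRank, hΔv, hu, Prod.Lex.toLex_lt_toLex] using hlt
  · obtain ⟨u, ℓ, hs, -, hlt⟩ := exists_step_dist_lt (reachable_schreierGraph (α := α) x₀ v) hv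
    refine ⟨(u, ℓ), ?_, fun h => absurd h hΔv, fun _ => hs⟩
    by_cases hΔu : Reachable Δ x₀ u <;> simp [treeRank, hΔv, hΔu, Prod.Lex.toLex_lt_toLex, hlt]

noncomputable def treeParent (v : X) (hv : v ≠ x₀) : X × (α × Bool) :=
  (exists_treeParent Δ x₀ v hv).choose

open Classical in
noncomputable def treeWord (v : X) : FreeGroup α :=
  if hv : v = x₀ then 1 else treeWord (treeParent Δ x₀ v hv).1 * mk [(treeParent Δ x₀ v hv).2]
termination_by treeRank Δ x₀ v
decreasing_by exact (exists_treeParent Δ x₀ v hv).choose_spec.1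

variable {Δ x₀} {v : X}

theorem treeWord_self : treeWord Δ x₀ x₀ = 1 := by
  rw [treeWord, dif_pos rfl]

theorem treeWord_of_ne (hv : v ≠ x₀) :
    treeWord Δ x₀ v = treeWord Δ x₀ (treeParent Δ x₀ v hv).1 * mk [(treeParent Δ x₀ v hv).2] := by
  rw [treeWord, dif_neg hv]

theorem step_treeParent (hΔ : Δ ⊆ schreierGraph α X) (hv : v ≠ x₀) :
    Step (schreierGraph α X) (treeParent Δ x₀ v hv).1 (treeParent Δ x₀ v hv).2 v := by
  have h := (exists_treeParent Δ x₀ v hv).choose_spec.2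
  by_cases hΔv : Reachable Δ x₀ v
  · exact (h.1 hΔv).1.mono hΔ
  · exact h.2 hΔv

theorem treeWord_smul (hΔ : Δ ⊆ schreierGraph α X) (v : X) : treeWord Δ x₀ v • v = x₀ := by
  induction v using treeWord.induct Δ x₀ with
  | case1 => rw [treeWord_self, one_smul]
  | case2 v hv ih =>
    rw [treeWord_of_ne hv, mul_smul, ← step_schreierGraph_iff.mp (step_treeParent hΔ hv), ih]

theorem exists_walk_treeWord (v : X) (hΔv : Reachable Δ x₀ v) :
    ∃ m, Walk Δ x₀ v m ∧ mk m = treeWord Δ x₀ v := by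
  induction v using treeWord.induct Δ x₀ with
  | case1 => exact ⟨[], .nil _, by rw [treeWord_self, one_eq_mk]⟩
  | case2 v hv ih =>
    obtain ⟨hs, hp⟩ := (exists_treeParent Δ x₀ v hv).choose_spec.2.1 hΔv
    obtain ⟨m, hm, hmk⟩ := ih hp
    exact ⟨_, hm.concat hs, by rw [← mul_mk, hmk, treeWord_of_ne hv]; rfl⟩

theorem loopSubgroup_eq_closure_schreierGen_treeWord :
    loopSubgroup Δ x₀ = Subgroup.closure (schreierGen (treeWord Δ x₀) '' restrict Δ x₀) :=
  loopSubgroup_eq_closure_schreierGen treeWord_self exists_walk_treeWord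

theorem schreierGen_treeWord_mem_stabilizer (hΔ : Δ ⊆ schreierGraph α X) {e : X × α × X}
    (he : e ∈ schreierGraph α X) : schreierGen (treeWord Δ x₀) e ∈ stabilizer (FreeGroup α) x₀ := by
  obtain ⟨c, a, d⟩ := e
  have hd : (treeWord Δ x₀ d)⁻¹ • x₀ = d := inv_smul_eq_iff.mpr (treeWord_smul hΔ d).symm
  rw [mem_stabilizer_iff, schreierGen, mul_smul, mul_smul, hd, ← show c = of a • d from he,
    treeWord_smul hΔ c]

theorem treeWord_smul_mul_mem_closure (g : FreeGroup α) (x : X) :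
    treeWord Δ x₀ (g • x) * g * (treeWord Δ x₀ x)⁻¹ ∈
      Subgroup.closure (schreierGen (treeWord Δ x₀) '' schreierGraph α X) := by
  induction g generalizing x with
  | C1 => simp
  | of a => exact Subgroup.subset_closure ⟨(of a • x, a, x), rfl, rfl⟩
  | inv_of a _ =>
    have he : (x, a, (of a)⁻¹ • x) ∈ schreierGraph α X := (smul_inv_smul (of a) x).symm
    convert inv_mem (Subgroup.subset_closure (Set.mem_image_of_mem (schreierGen _) he)) using 1
    simp [schreierGen, mul_assoc]
  | mul g h ihg ihh =>
    convert mul_mem (ihg (h • x)) (ihh x) using 1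
    rw [mul_smul]
    group

theorem closure_schreierGen_treeWord (hΔ : Δ ⊆ schreierGraph α X) :
    Subgroup.closure (schreierGen (treeWord Δ x₀) '' schreierGraph α X) =
      stabilizer (FreeGroup α) x₀ := by
  refine le_antisymm ((Subgroup.closure_le _).mpr ?_) fun g hg => ?_
  · rintro _ ⟨e, he, rfl⟩
    exact schreierGen_treeWord_mem_stabilizer hΔ he
  · simpa [mem_stabilizer_iff.mp hg, treeWord_self] using
      treeWord_smul_mul_mem_closure (x₀ := x₀) g x₀

end SpanningTree

section Holonomy

variable {M : Type*} [Group M] (lab : X × α × X → M)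

def holonomyStep (a : α) : Equiv.Perm (X × M) where
  toFun p := (of a • p.1, lab (of a • p.1, a, p.1) * p.2)
  invFun p := ((of a)⁻¹ • p.1, (lab (p.1, a, (of a)⁻¹ • p.1))⁻¹ * p.2)
  left_inv p := by simp
  right_inv p := by simp

/-- `g` moves `(x, m)` to `(g • x, h * m)`, where `h` is the product of the labels read along the
walk from `g • x` to `x` spelling `g`. -/
def holonomyAction : FreeGroup α →* Equiv.Perm (X × M) := FreeGroup.lift (holonomyStep lab)

theorem holonomyAction_of (a : α) (x : X) (m : M) :
    holonomyAction lab (of a) (x, m) = (of a • x, lab (of a • x, a, x) * m) := by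
  simp [holonomyAction, holonomyStep]

theorem holonomyAction_of_inv (a : α) (x : X) (m : M) :
    holonomyAction lab (of a)⁻¹ (x, m) = ((of a)⁻¹ • x, (lab (x, a, (of a)⁻¹ • x))⁻¹ * m) := by
  simp [holonomyAction, holonomyStep, Equiv.Perm.inv_def]

theorem holonomyAction_apply (g : FreeGroup α) (x : X) (m : M) :
    holonomyAction lab g (x, m) = (g • x, (holonomyAction lab g (x, 1)).2 * m) := by
  induction g generalizing x m with
  | C1 => simp
  | of a => simp [holonomyAction_of]
  | inv_of a _ => rw [holonomyAction_of_inv, holonomyAction_of_inv, mul_one]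
  | mul g h ihg ihh =>
    rw [map_mul, Equiv.Perm.mul_apply, Equiv.Perm.mul_apply, ihh x m, ihh x 1,
      ihg (h • x) (_ * m), ihg (h • x) (_ * 1)]
    simp [mul_smul, mul_assoc]

def holonomy (x₀ : X) : stabilizer (FreeGroup α) x₀ →* M where
  toFun k := (holonomyAction lab k (x₀, 1)).2
  map_one' := by simp
  map_mul' k k' := by
    simp only [Subgroup.coe_mul, map_mul, Equiv.Perm.mul_apply]
    rw [holonomyAction_apply lab k', mem_stabilizer_iff.mp k'.2, holonomyAction_apply lab k]

variable [IsPretransitive (FreeGroup α) X] {Δ : LabelledGraph X α} {x₀ : X}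

theorem holonomyAction_treeWord (hΔ : Δ ⊆ schreierGraph α X)
    (hlab : ∀ e ∈ schreierGraph α X, schreierGen (treeWord Δ x₀) e = 1 → lab e = 1)
    (v : X) (m : M) : holonomyAction lab (treeWord Δ x₀ v) (v, m) = (x₀, m) := by
  induction v using treeWord.induct Δ x₀ generalizing m with
  | case1 => simp [treeWord_self]
  | case2 v hv ih =>
    have hs := step_treeParent hΔ hv
    have hw := treeWord_of_ne (Δ := Δ) hv
    rcases hp : treeParent Δ x₀ v hv with ⟨p, a, _ | _⟩ <;> rw [hp] at hs hw ih <;>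
      rw [hw, map_mul, Equiv.Perm.mul_apply]
    · have he : v = of a • p := hs
      have hγ : schreierGen (treeWord Δ x₀) (v, a, p) = 1 := by
        simp [schreierGen, hw, mk_singleton_false]
      have hlab1 := hlab _ hs hγ
      rw [mk_singleton_false, holonomyAction_of_inv, he, inv_smul_smul, ← he, hlab1, inv_one,
        one_mul, ih]
    · have he : p = of a • v := hs
      have hγ : schreierGen (treeWord Δ x₀) (p, a, v) = 1 := by
        rw [schreierGen]
        dsimp only
        rw [hw]
        exact mul_inv_cancel _
      have hlab1 := hlab _ hs hγ
      rw [show mk [(a, true)] = of a from rfl, holonomyAction_of, ← he, hlab1, one_mul, ih]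

theorem holonomy_schreierGen (hΔ : Δ ⊆ schreierGraph α X)
    (hlab : ∀ e ∈ schreierGraph α X, schreierGen (treeWord Δ x₀) e = 1 → lab e = 1)
    {e : X × α × X} (he : e ∈ schreierGraph α X) :
    holonomy lab x₀ ⟨_, schreierGen_treeWord_mem_stabilizer hΔ he⟩ = lab e := by
  obtain ⟨c, a, d⟩ := e
  have hd : (holonomyAction lab (treeWord Δ x₀ d))⁻¹ (x₀, 1) = (d, 1) :=
    Equiv.Perm.inv_eq_iff_eq.mpr (holonomyAction_treeWord lab hΔ hlab d 1).symm
  change (holonomyAction lab (treeWord Δ x₀ c * of a * (treeWord Δ x₀ d)⁻¹) (x₀, 1)).2 = _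
  rw [map_mul, map_mul, map_inv, Equiv.Perm.mul_apply, Equiv.Perm.mul_apply, hd,
    holonomyAction_of, ← show c = of a • d from he, mul_one,
    holonomyAction_treeWord lab hΔ hlab c]

end Holonomy

open Classical in
theorem isFreeFactor_loopSubgroup {α : Type} {X : Type*} [MulAction (FreeGroup α) X]
    [IsPretransitive (FreeGroup α) X] {Δ : LabelledGraph X α} (hΔ : Δ ⊆ schreierGraph α X)
    (x₀ : X) : IsFreeFactor (loopSubgroup Δ x₀) (stabilizer (FreeGroup α) x₀) := by
  set γ := schreierGen (treeWord Δ x₀)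
  set Δ₀ := restrict Δ x₀
  have hΔ₀ : Δ₀ ⊆ schreierGraph α X := restrict_subset.trans hΔ
  let lab : X × α × X → Monoid.Coprod (Subgroup.closure (γ '' Δ₀))
      (Subgroup.closure (γ '' (schreierGraph α X \ Δ₀))) := fun e =>
    if h : e ∈ Δ₀ then .inl ⟨γ e, Subgroup.subset_closure ⟨e, h, rfl⟩⟩
    else if h' : e ∈ schreierGraph α X \ Δ₀ then .inr ⟨γ e, Subgroup.subset_closure ⟨e, h', rfl⟩⟩
    else 1
  have hlab : ∀ e ∈ schreierGraph α X, γ e = 1 → lab e = 1 := by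
    intro e _ hγ
    have h1 (H : Subgroup (FreeGroup α)) (h : γ e ∈ H) : (⟨γ e, h⟩ : H) = 1 := Subtype.ext hγ
    simp only [lab, h1, map_one, dite_eq_ite, ite_self]
  rw [loopSubgroup_eq_closure_schreierGen_treeWord]
  -- the holonomy of `lab` sends every Schreier generator to its copy in the coproduct
  refine isFreeFactor_closure_of_retraction ?_ ?_ ?_ (holonomy lab x₀) ?_ ?_
  · rintro _ ⟨e, he, rfl⟩
    exact schreierGen_treeWord_mem_stabilizer hΔ (hΔ₀ he)
  · rintro _ ⟨e, he, rfl⟩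
    exact schreierGen_treeWord_mem_stabilizer hΔ he.1
  · rw [← Set.image_union, Set.union_sdiff_cancel hΔ₀, closure_schreierGen_treeWord hΔ]
  · rintro _ ⟨e, he, rfl⟩
    rw [holonomy_schreierGen lab hΔ hlab (hΔ₀ he)]
    exact dif_pos he
  · rintro _ ⟨e, he, rfl⟩
    rw [holonomy_schreierGen lab hΔ hlab he.1]
    exact (dif_neg he.2).trans (dif_pos he)

end Schreier

theorem Directed.exists_forall_le_iInf {ι L : Type*} [CompleteLattice L] [Nonempty ι]
    {N : ι → L} (hN : Directed (· ≥ ·) N) {C : Set L} (hC : C.Finite) :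
    ∃ j₀, ∀ c ∈ C, c ≤ N j₀ → c ≤ ⨅ j, N j := by
  have h : ∀ c, ∃ j, c ≤ N j → c ≤ ⨅ j, N j := by
    intro c
    by_cases hc : c ≤ ⨅ j, N j
    · exact ⟨Classical.arbitrary ι, fun _ => hc⟩
    · obtain ⟨j, hj⟩ : ∃ j, ¬ c ≤ N j := by simpa [le_iInf_iff] using hc
      exact ⟨j, fun h => absurd h hj⟩
  choose f hf using h
  classical
  obtain ⟨j₀, hj₀⟩ := hN.finset_le (hC.toFinset.image f)
  exact ⟨j₀, fun c hc hcj =>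
    hf c (hcj.trans (hj₀ (f c) (Finset.mem_image_of_mem f (hC.mem_toFinset.mpr hc))))⟩

section Candidates

open LabelledGraph MulAction

variable {α : Type}

theorem exists_restrict_subset_comap_schreierGraph {V X : Type*} [MulAction (FreeGroup α) X]
    (E : LabelledGraph V α) (b : V) (x₀ : X)
    (hE : loopSubgroup E b ≤ stabilizer (FreeGroup α) x₀) :
    ∃ φ : V → X, φ b = x₀ ∧ restrict E b ⊆ comap φ (schreierGraph α X) := by
  classical
  let φ : V → X := fun v => if h : Reachable E b v then (mk h.choose)⁻¹ • x₀ else x₀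
  have hφ : ∀ v m, Walk E b v m → φ v = (mk m)⁻¹ • x₀ := by
    intro v m hm
    have hv : Reachable E b v := ⟨m, hm⟩
    have hloop : mk hv.choose * (mk m)⁻¹ ∈ stabilizer (FreeGroup α) x₀ :=
      hE ⟨_, hv.choose_spec.append hm.reverse, by rw [← mul_mk, inv_mk]⟩
    calc φ v = (mk hv.choose)⁻¹ • (mk hv.choose * (mk m)⁻¹) • x₀ := by
          rw [mem_stabilizer_iff.mp hloop]
          exact dif_pos hv
      _ = (mk m)⁻¹ • x₀ := by rw [smul_smul, inv_mul_cancel_left]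
  refine ⟨φ, by simpa [← one_eq_mk] using hφ b [] (.nil b), ?_⟩
  rintro ⟨u, a, v⟩ ⟨he, m, hm⟩
  change φ u = of a • φ v
  rw [hφ u m hm, hφ v _ (hm.concat (ℓ := (a, true)) he), ← mul_mk, mul_inv_rev, mul_smul]
  exact (smul_inv_smul (of a) _).symm

variable (α) in
def loopSubgroupsOn (V : Type*) : Set (Subgroup (FreeGroup α)) :=
  Set.range fun p : LabelledGraph V α × V => loopSubgroup p.1 p.2

theorem finite_loopSubgroupsOn [Finite α] (V : Type*) [Finite V] :
    (loopSubgroupsOn α V).Finite :=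
  Set.finite_range _

theorem fg_of_mem_loopSubgroupsOn [Finite α] {V : Type*} [Finite V] {H : Subgroup (FreeGroup α)}
    (hH : H ∈ loopSubgroupsOn α V) : H.FG := by
  obtain ⟨⟨E, b⟩, rfl⟩ := hH
  exact loopSubgroup_fg E b

theorem exists_mem_loopSubgroupsOn_of_finite {K : Subgroup (FreeGroup α)} {S : Set (FreeGroup α)}
    (hS : S.Finite) (hSK : S ⊆ K) :
    ∃ (V : Type) (_ : Finite V), ∃ M ∈ loopSubgroupsOn α V, S ⊆ M ∧ M ≤ K := by
  classical
  let x₀ : FreeGroup α ⧸ K := (1 : FreeGroup α)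
  -- the cosets visited when the elements of `S` are read from `x₀`
  let A : Set (FreeGroup α ⧸ K) :=
    insert x₀ (⋃ s ∈ S, (fun p => (mk p)⁻¹ • x₀) '' {p | p ∈ (toWord s).inits})
  have hA : A.Finite := (hS.biUnion fun s _ => (List.finite_toSet _).image _).insert x₀
  have hK : stabilizer (FreeGroup α) x₀ = K := stabilizer_quotient K
  refine ⟨A, hA.to_subtype, _, ⟨(comap Subtype.val (schreierGraph α _), ⟨x₀, Set.mem_insert _ _⟩),
    rfl⟩, fun s hs => ?_, ?_⟩
  · have h := walk_induce_schreierGraph (A := A) x₀ (toWord s) fun p hp =>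
      Set.mem_insert_of_mem _ (Set.mem_biUnion hs ⟨p, hp, rfl⟩)
    rw [mk_toWord, mem_stabilizer_iff.mp (inv_mem (hK.ge (hSK hs)))] at h
    dsimp only
    rw [SetLike.mem_coe, loopSubgroup_comap, Subtype.range_coe]
    exact ⟨_, h, mk_toWord⟩
  · dsimp only
    rw [loopSubgroup_comap, Subtype.range_coe]
    exact (loopSubgroup_le_stabilizer (induce_subset _) x₀).trans hK.le

theorem exists_mem_loopSubgroupsOn_isFreeFactor {V : Type*} {M K : Subgroup (FreeGroup α)}
    (hM : M ∈ loopSubgroupsOn α V) (hMK : M ≤ K) :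
    ∃ L ∈ loopSubgroupsOn α V, M ≤ L ∧ IsFreeFactor L K := by
  obtain ⟨⟨E, b⟩, rfl⟩ := hM
  dsimp only at hMK ⊢
  let x₀ : FreeGroup α ⧸ K := (1 : FreeGroup α)
  have hK : stabilizer (FreeGroup α) x₀ = K := stabilizer_quotient K
  obtain ⟨φ, hφb, hφ⟩ := exists_restrict_subset_comap_schreierGraph E b x₀ (hMK.trans hK.ge)
  refine ⟨_, ⟨(comap φ (schreierGraph α _), b), rfl⟩, ?_, ?_⟩
  · rintro _ ⟨m, hm, rfl⟩
    exact ⟨m, (hm.restrict (.refl E b)).mono hφ, rfl⟩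
  · have h := isFreeFactor_loopSubgroup (induce_subset (E := schreierGraph α _) (Set.range φ)) x₀
    rwa [hK, ← hφb, ← loopSubgroup_comap] at h

end Candidates

/-- Let `(N_j)_{j ∈ J}` be a downward-directed family of subgroups of `F_n`, let
`N = ⋂ N_j`, and let `S ⊆ N` be finite.  Then there are a finitely generated
subgroup `H` with `S ⊆ H ≤ N` and an index `j₀` such that `H` is a free factor of
every subgroup `N'` with `H ≤ N' ≤ N_{j₀}`. -/
theorem directed_family_freeFactor (n : ℕ) (J : Type) [Nonempty J]
    (N : J → Subgroup (FreeGroup (Fin n)))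
    (hdir : ∀ j₁ j₂ : J, ∃ j₃ : J, N j₃ ≤ N j₁ ⊓ N j₂)
    (S : Set (FreeGroup (Fin n))) (hSfin : S.Finite)
    (hS : S ⊆ ↑(⨅ j : J, N j)) :
    ∃ (H : Subgroup (FreeGroup (Fin n))) (j₀ : J),
      H.FG ∧ S ⊆ ↑H ∧ H ≤ ⨅ j : J, N j ∧
        ∀ N' : Subgroup (FreeGroup (Fin n)), H ≤ N' → N' ≤ N j₀ →
          IsFreeFactor H N' := by
  obtain ⟨V, _, M₀, hM₀, hSM₀, hM₀N⟩ := exists_mem_loopSubgroupsOn_of_finite hSfin hS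
  obtain ⟨H, hHmax⟩ := Set.Finite.exists_maximal
    (s := {M | M ∈ loopSubgroupsOn (Fin n) V ∧ S ⊆ M ∧ M ≤ ⨅ j, N j})
    ((finite_loopSubgroupsOn V).subset fun _ h => h.1) ⟨M₀, hM₀, hSM₀, hM₀N⟩
  obtain ⟨hH, hSH, hHN⟩ := hHmax.prop
  have hNdir : Directed (· ≥ ·) N := fun j₁ j₂ => (hdir j₁ j₂).imp fun _ h => le_inf_iff.mp h
  obtain ⟨j₀, hj₀⟩ := hNdir.exists_forall_le_iInf (finite_loopSubgroupsOn (α := Fin n) V)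
  refine ⟨H, j₀, fg_of_mem_loopSubgroupsOn hH, hSH, hHN, fun N' hHN' hN'j₀ => ?_⟩
  obtain ⟨L, hL, hHL, hLN'⟩ := exists_mem_loopSubgroupsOn_isFreeFactor hH hHN'
  have hLN : L ≤ ⨅ j, N j := hj₀ L hL (hLN'.fst.trans hN'j₀)
  rwa [hHmax.eq_of_le ⟨hL, hSH.trans hHL, hLN⟩ hHL]
end
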